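/- Let P : ℝⁿ → ℝ be a non-constant polynomial function. Then the zero set P⁻¹(0) is a porous subset of ℝⁿ. -/

import Mathlib

/-!
Move a point `x` of the zero set to the origin and let `Q_m` be the lowest nonzero homogeneous
component of the translated polynomial `Q`. Then `Q (r w) = r ^ m F (r, w)` with `F` jointly
continuous and `F (0, w) = Q_m (w)`. Choosing `y` with `Q_m (y) ≠ 0`, `F` has no zero near
`(0, y)`, so `Q` has no zero in a truncated cone `{r w | 0 < r < δ, ‖w - y‖ < ε}`. For small
`R`, this cone contains a ball of radius proportional to `R` inside `B_R(x)`.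
-/

open Metric Filter Set

/-- γ(x,R,X): sup of radii r ≥ 0 of open balls contained in B_R(x) \ X (sup ∅ = 0). -/
noncomputable def porGamma {E : Type*} [SeminormedAddCommGroup E] (x : E) (R : ℝ) (X : Set E) : ℝ :=
  sSup {r : ℝ | 0 ≤ r ∧ ∃ x' : E, ball x' r ⊆ ball x R \ X}

/-- Porosity of X at x: liminf_{R→0⁺} γ(x,R,X)/R. -/
noncomputable def porosityAt {E : Type*} [SeminormedAddCommGroup E] (x : E) (X : Set E) : ℝ :=
  liminf (fun R => porGamma x R X / R) (nhdsWithin 0 (Ioi 0))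

/-- X is porous if its porosity is positive at each of its points. -/
def IsPorous {E : Type*} [SeminormedAddCommGroup E] (X : Set E) : Prop :=
  ∀ x ∈ X, 0 < porosityAt x X

/-- X is σ-porous if it is a countable union of porous sets. -/
def IsSigmaPorous {E : Type*} [SeminormedAddCommGroup E] (X : Set E) : Prop :=
  ∃ f : ℕ → Set E, (∀ k, IsPorous (f k)) ∧ X = ⋃ k, f k

/-- Asymptotic cone of X. -/
def asympCone {E : Type*} [SeminormedAddCommGroup E] [NormedSpace ℝ E] (X : Set E) : Set E :=
  {v | ∃ (x : ℕ → E) (t : ℕ → ℝ), (∀ k, x k ∈ X) ∧ (∀ k, 0 < t k) ∧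
    Tendsto (fun k => ‖x k‖) atTop atTop ∧ Tendsto (fun k => t k • x k) atTop (nhds v)}

open Topology MvPolynomial

section Porosity

variable {E : Type*} [NormedAddCommGroup E] [NormedSpace ℝ E] [Nontrivial E]

lemma radius_le_of_ball_subset_ball {x x' : E} {r R : ℝ} (hr : 0 ≤ r) (hR : 0 ≤ R)
    (h : ball x' r ⊆ ball x R) : r ≤ R := by
  have := diam_mono h isBounded_ball
  rw [diam_ball_eq x' hr] at this
  linarith [diam_ball (x := x) hR]

lemma mem_upperBounds_porGamma_set (x : E) {R : ℝ} (hR : 0 ≤ R) (X : Set E) :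
    R ∈ upperBounds {r : ℝ | 0 ≤ r ∧ ∃ x' : E, ball x' r ⊆ ball x R \ X} :=
  fun _ ⟨hr, _, h⟩ => radius_le_of_ball_subset_ball hr hR (h.trans sdiff_subset)

lemma porGamma_le (x : E) {R : ℝ} (hR : 0 ≤ R) (X : Set E) : porGamma x R X ≤ R :=
  csSup_le ⟨0, le_rfl, x, by simp⟩ (mem_upperBounds_porGamma_set x hR X)

lemma le_porGamma {x x' : E} {r R : ℝ} {X : Set E} (hr : 0 ≤ r) (hR : 0 ≤ R)
    (h : ball x' r ⊆ ball x R \ X) : r ≤ porGamma x R X :=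
  le_csSup ⟨R, mem_upperBounds_porGamma_set x hR X⟩ ⟨hr, x', h⟩

lemma le_porosityAt {x : E} {X : Set E} {c : ℝ} (hc : 0 ≤ c)
    (h : ∀ᶠ R in 𝓝[>] 0, ∃ x', ball x' (c * R) ⊆ ball x R \ X) : c ≤ porosityAt x X := by
  refine le_liminf_of_le (isCoboundedUnder_ge_of_eventually_le _ (x := 1) ?_) ?_
  · filter_upwards [self_mem_nhdsWithin] with R (hR : 0 < R)
    exact (div_le_one hR).2 (porGamma_le x hR.le X)
  · filter_upwards [h, self_mem_nhdsWithin] with R ⟨x', hx'⟩ (hR : 0 < R)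
    exact (le_div_iff₀ hR).2 (le_porGamma (by positivity) hR.le hx')

lemma porosityAt_pos_of_eventually_add_smul_notMem {x y : E} {X : Set E}
    (h : ∀ᶠ p : ℝ × E in 𝓝[>] 0 ×ˢ 𝓝 y, x + p.1 • p.2 ∉ X) : 0 < porosityAt x X := by
  obtain ⟨⟨δ, ε⟩, ⟨hδ, hε⟩, hsub⟩ := ((nhdsGT_basis 0).prod nhds_basis_ball).mem_iff.1 h
  -- The ball of radius `t ε'` about `x + t y`, `t = s R`, lies in the cone and, thanks to the
  -- factor `s`, in `ball x R`.
  set s := (‖y‖ + 1)⁻¹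
  set ε' := min ε 1
  have hc : 0 < s * ε' := mul_pos (by positivity) (lt_min hε one_pos)
  refine hc.trans_le (le_porosityAt hc.le ?_)
  filter_upwards [Ioo_mem_nhdsGT (show 0 < δ / s by positivity)] with R ⟨hR, hRδ⟩
  set t := s * R
  have ht : 0 < t := by positivity
  refine ⟨x + t • y, fun z hz => ?_⟩
  have hz' : dist z (x + t • y) < t * ε' := by rw [mem_ball] at hz; linarith
  refine ⟨?_, fun hzX => ?_⟩
  · calc dist z x ≤ dist z (x + t • y) + dist (x + t • y) x := dist_triangle _ _ _
      _ < t * ε' + t * ‖y‖ := by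
        rw [dist_eq_norm (x + t • y), add_sub_cancel_left, norm_smul, Real.norm_of_nonneg ht.le]
        exact add_lt_add_of_lt_of_le hz' le_rfl
      _ ≤ t * (‖y‖ + 1) := by nlinarith [min_le_right ε 1]
      _ = R := by simp only [t, s]; field_simp
  · have hw : dist (t⁻¹ • (z - x)) y < ε := by
      calc dist (t⁻¹ • (z - x)) y = t⁻¹ * dist z (x + t • y) := by
            rw [← inv_smul_smul₀ ht.ne' y, dist_smul₀, smul_inv_smul₀ ht.ne',
              Real.norm_of_nonneg (by positivity), dist_eq_norm, dist_eq_norm, sub_sub]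
        _ < t⁻¹ * (t * ε') := by gcongr
        _ ≤ ε := by rw [inv_mul_cancel_left₀ ht.ne']; exact min_le_left ε 1
    refine @hsub (t, t⁻¹ • (z - x)) ⟨⟨ht, ?_⟩, hw⟩ ?_
    · rwa [lt_div_iff₀ (by positivity), mul_comm] at hRδ
    · simpa [smul_inv_smul₀ ht.ne'] using hzX

end Porosity

namespace MvPolynomial

lemma IsHomogeneous.eval_smul {R σ : Type*} [CommSemiring R] {φ : MvPolynomial σ R} {k : ℕ}
    (hφ : φ.IsHomogeneous k) (r : R) (w : σ → R) :
    eval (r • w) φ = r ^ k * eval w φ := by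
  simp only [eval_eq, Finset.mul_sum]
  refine Finset.sum_congr rfl fun d hd => ?_
  have hdeg : ∑ i ∈ d.support, d i = k := by
    rw [← Finsupp.degree_apply, Finsupp.degree_eq_weight_one]
    exact hφ (mem_support_iff.mp hd)
  simp only [Pi.smul_apply, smul_eq_mul, mul_pow, Finset.prod_mul_distrib,
    Finset.prod_pow_eq_pow_sum, hdeg]
  ring

/-- The truncated exponent `k - m` is harmless: the components of degree `k < m` vanish. -/
lemma eval_smul_eq_pow_mul_sum {R σ : Type*} [CommSemiring R] {Q : MvPolynomial σ R} {m : ℕ}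
    (hQ : ∀ k < m, homogeneousComponent k Q = 0) (r : R) (w : σ → R) :
    eval (r • w) Q = r ^ m * ∑ k ∈ Finset.range (Q.totalDegree + 1),
      r ^ (k - m) * eval w (homogeneousComponent k Q) := by
  conv_lhs => rw [← sum_homogeneousComponent Q]
  rw [map_sum, Finset.mul_sum]
  refine Finset.sum_congr rfl fun k _ => ?_
  rw [(homogeneousComponent_isHomogeneous k Q).eval_smul]
  rcases lt_or_ge k m with hk | hk
  · simp [hQ k hk]
  · rw [← mul_assoc, ← pow_add, Nat.add_sub_cancel' hk]

variable {𝕜 σ : Type*} [NontriviallyNormedField 𝕜]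

lemma exists_eventually_eval_smul_ne_zero {Q : MvPolynomial σ 𝕜} (hQ : Q ≠ 0) :
    ∃ y : σ → 𝕜, ∀ᶠ p : 𝕜 × (σ → 𝕜) in 𝓝[≠] 0 ×ˢ 𝓝 y, eval (p.1 • p.2) Q ≠ 0 := by
  classical
  have hex : ∃ k, homogeneousComponent k Q ≠ 0 := by
    by_contra! h
    exact hQ (by rw [← sum_homogeneousComponent Q]; exact Finset.sum_eq_zero fun k _ => h k)
  set m := Nat.find hex
  have hlow : ∀ k < m, homogeneousComponent k Q = 0 := fun k hk => not_not.1 (Nat.find_min hex hk)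
  obtain ⟨y, hy⟩ : ∃ y, eval y (homogeneousComponent m Q) ≠ 0 := by
    by_contra! h
    exact Nat.find_spec hex (funext fun y => by simpa using h y)
  -- `F (r, w) = r⁻ᵐ Q (r w)` for `r ≠ 0`, and `F (0, w)` is the lowest-order part of `Q` at `w`.
  let F : 𝕜 × (σ → 𝕜) → 𝕜 := fun p => ∑ k ∈ Finset.range (Q.totalDegree + 1),
    p.1 ^ (k - m) * eval p.2 (homogeneousComponent k Q)
  have hF : Continuous F := continuous_finsetSum _ fun k _ =>
    (continuous_fst.pow _).mul ((continuous_eval _).comp continuous_snd)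
  have hF0 : F (0, y) = eval y (homogeneousComponent m Q) := by
    refine (Finset.sum_eq_single m (fun k _ hkm => ?_) fun hm => ?_).trans (by simp)
    · rcases lt_or_gt_of_ne hkm with hk | hk
      · simp [hlow k hk]
      · simp [zero_pow (Nat.sub_ne_zero_of_lt hk)]
    · simp [homogeneousComponent_eq_zero _ _ (by simpa using hm)]
  refine ⟨y, ?_⟩
  have hFne := hF.continuousAt.eventually_ne (hF0 ▸ hy)
  rw [nhds_prod_eq] at hFne
  filter_upwards [hFne.filter_mono (prod_mono nhdsWithin_le_nhds le_rfl),
    prod_mem_prod self_mem_nhdsWithin univ_mem] with p hFp ⟨(hp : p.1 ≠ 0), _⟩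
  rw [eval_smul_eq_pow_mul_sum hlow]
  exact mul_ne_zero (pow_ne_zero _ hp) hFp

lemma exists_eventually_eval_add_smul_ne_zero {P : MvPolynomial σ 𝕜} (hP : P ≠ 0) (x : σ → 𝕜) :
    ∃ y : σ → 𝕜, ∀ᶠ p : 𝕜 × (σ → 𝕜) in 𝓝[≠] 0 ×ˢ 𝓝 y, eval (x + p.1 • p.2) P ≠ 0 := by
  have heval (v : σ → 𝕜) : eval v (bind₁ (fun i => X i + C (x i)) P) = eval (x + v) P := by
    rw [eval, eval₂Hom_bind₁]
    simp [Pi.add_def, add_comm]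
  have hQ : bind₁ (fun i => X i + C (x i)) P ≠ 0 := fun h =>
    hP (funext fun v => by simpa [h] using (heval (v - x)).symm)
  simpa only [heval] using exists_eventually_eval_smul_ne_zero hQ

end MvPolynomial

/-- The zero set of a non-constant polynomial on ℝⁿ is porous. -/
theorem polynomial_zeroSet_porous {n : ℕ} (P : MvPolynomial (Fin n) ℝ)
    (hP : ¬ ∃ c : ℝ, P = MvPolynomial.C c) :
    IsPorous {x : EuclideanSpace ℝ (Fin n) | MvPolynomial.eval (fun i => x i) P = 0} := by
  have : Nonempty (Fin n) := by
    by_contra h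
    rw [not_nonempty_iff] at h
    obtain ⟨c, hc⟩ := C_surjective (Fin n) P
    exact hP ⟨c, hc.symm⟩
  have hP0 : P ≠ 0 := fun h => hP ⟨0, by rw [h, C_0]⟩
  intro x _
  obtain ⟨y, hy⟩ := exists_eventually_eval_add_smul_ne_zero hP0 (WithLp.ofLp x)
  refine porosityAt_pos_of_eventually_add_smul_notMem (y := WithLp.toLp 2 y) ?_
  have hmap : Tendsto (Prod.map id WithLp.ofLp) (𝓝[>] 0 ×ˢ 𝓝 (WithLp.toLp 2 y))
      (𝓝[≠] (0 : ℝ) ×ˢ 𝓝 y) :=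
    Tendsto.prodMap (tendsto_id'.2 (nhdsWithin_mono _ fun _ h => ne_of_gt h))
      ((PiLp.continuous_ofLp 2 _).tendsto _)
  refine (hmap.eventually hy).mono fun p hp => ?_
  show eval (WithLp.ofLp (x + p.1 • p.2)) P ≠ 0
  rwa [WithLp.ofLp_add, WithLp.ofLp_smul]
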